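/- Coxeter's second ladder: Li₂(ρ¹²) = 2·Li₂(ρ⁶) + 3·Li₂(ρ⁴) + 4·Li₂(ρ³) − 6·Li₂(ρ²) + π²/10, where ρ = (√5−1)/2. -/

import Mathlib

/-- The polylogarithm `Li_s(x) = ∑_{n ≥ 1} x^n / n^s` as a real series. -/
noncomputable def Li (s : ℕ) (x : ℝ) : ℝ := ∑' n : ℕ, x ^ (n + 1) / (n + 1 : ℝ) ^ s

/-!
The Rogers dilogarithm `L(x) = Li₂(x) + log x · log (1 - x) / 2` is continuous on `[0, 1]` and
satisfies the reflection formula `L(x) + L(1 - x) = π² / 6` and Abel's five-term identity: in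
both cases the derivative of the difference of the two sides vanishes, and the value at `x = 1`
is known. For `r = ρ` every power of `r` reduces modulo `r² = 1 - r` to some `a + b r`, and
eight instances of Abel's identity together with two reflections at such points form a linear
system which yields `L(r²) = π² / 15` and `4 L(r³) + 3 L(r⁴) + 2 L(r⁶) - L(r¹²) = 3π² / 10`.
Passing back to `Li₂`, the logarithmic terms cancel, since `1 - r²`, `1 - r³`, `1 - r⁶` and
`1 - r¹²` factor into powers of `2`, `r` and `1 - r⁴`.
-/

open Real Set Filter Topology

lemma summable_one_div_nat_succ_pow {s : ℕ} (hs : 1 < s) :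
    Summable fun n : ℕ => 1 / ((n : ℝ) + 1) ^ s := by
  simpa using (summable_nat_add_iff 1).mpr (Real.summable_one_div_nat_pow.mpr hs)

lemma norm_pow_div_natCast_succ_pow (x : ℝ) (n k s : ℕ) :
    ‖x ^ k / ((n : ℝ) + 1) ^ s‖ = |x| ^ k / ((n : ℝ) + 1) ^ s := by
  have hn : |(n : ℝ) + 1| = n + 1 := abs_of_pos (Nat.cast_add_one_pos n)
  rw [norm_div, norm_pow, norm_pow, Real.norm_eq_abs, Real.norm_eq_abs, hn]

lemma continuousOn_Li {s : ℕ} (hs : 1 < s) : ContinuousOn (Li s) (Icc (-1) 1) := by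
  refine continuousOn_tsum (fun n => (continuous_pow _).continuousOn.div_const _)
    (summable_one_div_nat_succ_pow hs) fun n x hx => ?_
  rw [norm_pow_div_natCast_succ_pow]
  gcongr
  exact pow_le_one₀ (abs_nonneg x) (abs_le.mpr hx)

lemma Li_zero (s : ℕ) : Li s 0 = 0 := by simp [Li]

lemma Li_two_one : Li 2 1 = π ^ 2 / 6 := by
  have := (hasSum_nat_add_iff' 1).mpr (by simpa using hasSum_zeta_two)
  simpa [Li] using this.tsum_eq

lemma hasDerivAt_Li_succ (s : ℕ) {x : ℝ} (hx : |x| < 1) :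
    HasDerivAt (Li (s + 1)) (∑' n : ℕ, x ^ n / ((n : ℝ) + 1) ^ s) x := by
  obtain ⟨r, hxr, hr1⟩ := exists_between hx
  have hr0 : 0 < r := (abs_nonneg x).trans_lt hxr
  refine hasDerivAt_tsum_of_isPreconnected (u := fun n : ℕ => r ^ n)
    (g := fun n z => z ^ (n + 1) / ((n : ℝ) + 1) ^ (s + 1))
    (g' := fun n z => z ^ n / ((n : ℝ) + 1) ^ s)
    (summable_geometric_of_lt_one hr0.le hr1) isOpen_Ioo (convex_Ioo (-r) r).isPreconnected
    (fun n y _ => ?_) (fun n y hy => ?_) (y₀ := 0) ⟨neg_lt_zero.mpr hr0, hr0⟩ ?_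
    (abs_lt.mp hxr)
  · refine ((hasDerivAt_pow (n + 1) y).div_const (((n : ℝ) + 1) ^ (s + 1))).congr_deriv ?_
    rw [Nat.add_sub_cancel, Nat.cast_add_one]
    field_simp
    ring
  · rw [norm_pow_div_natCast_succ_pow]
    calc |y| ^ n / ((n : ℝ) + 1) ^ s ≤ r ^ n / 1 := by
          gcongr
          · exact (abs_lt.mpr hy).le
          · exact one_le_pow₀ (by simp)
      _ = r ^ n := div_one _
  · simp

lemma hasDerivAt_Li_two {x : ℝ} (hx0 : x ≠ 0) (hx : |x| < 1) :
    HasDerivAt (Li 2) (-log (1 - x) / x) x := by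
  convert hasDerivAt_Li_succ 1 hx using 1
  refine (((hasSum_pow_div_log_of_abs_lt_one hx).div_const x).congr_fun fun n => ?_).tsum_eq.symm
  field_simp
  ring

lemma abs_log_one_sub_le {t : ℝ} (ht : |t| ≤ 1 / 2) : |log (1 - t)| ≤ 2 * |t| := by
  have h := abs_log_sub_add_sum_range_le (show |t| < 1 by linarith) 0
  rw [Finset.sum_range_zero, zero_add, zero_add, pow_one] at h
  calc |log (1 - t)| ≤ |t| / (1 - |t|) := h
    _ ≤ |t| / (1 / 2) := by gcongr; linarith
    _ = 2 * |t| := by ring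

lemma continuousAt_log_mul_log_one_sub_zero :
    ContinuousAt (fun t : ℝ => log t * log (1 - t)) 0 := by
  rw [ContinuousAt, sub_zero, log_one, mul_zero]
  refine squeeze_zero_norm' (a := fun t => 2 * ‖t * log t‖) ?_
    (by simpa using ((continuous_mul_log.tendsto 0).norm).const_mul 2)
  filter_upwards [Metric.closedBall_mem_nhds (0 : ℝ) (by norm_num : (0 : ℝ) < 1 / 2)] with t ht
  rw [Metric.mem_closedBall, dist_zero_right, Real.norm_eq_abs] at ht
  calc ‖log t * log (1 - t)‖ = |log t| * |log (1 - t)| := by rw [Real.norm_eq_abs, abs_mul]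
    _ ≤ |log t| * (2 * |t|) := by gcongr; exact abs_log_one_sub_le ht
    _ = 2 * ‖t * log t‖ := by rw [Real.norm_eq_abs, abs_mul]; ring

lemma continuous_log_mul_log_one_sub : Continuous fun t : ℝ => log t * log (1 - t) := by
  refine continuous_iff_continuousAt.mpr fun x => ?_
  rcases eq_or_ne x 0 with rfl | hx0
  · exact continuousAt_log_mul_log_one_sub_zero
  rcases eq_or_ne x 1 with rfl | hx1
  · have hsymm : (fun t : ℝ => log t * log (1 - t)) =
        (fun t : ℝ => log t * log (1 - t)) ∘ (fun t => 1 - t) := by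
      funext t; simp [mul_comm]
    rw [hsymm]
    exact ContinuousAt.comp (by simpa using continuousAt_log_mul_log_one_sub_zero) (by fun_prop)
  · exact (continuousAt_log hx0).mul ((continuousAt_log (sub_ne_zero.mpr hx1.symm)).comp
      (by fun_prop))

lemma eq_of_continuousOn_of_hasDerivAt_zero {f : ℝ → ℝ} {a b : ℝ} (hab : a ≤ b)
    (hf : ContinuousOn f (Icc a b)) (hf' : ∀ t ∈ Ioo a b, HasDerivAt f 0 t) : f a = f b := by
  rcases hab.eq_or_lt with rfl | hab
  · rfl
  obtain ⟨c, -, hc⟩ := exists_hasDerivAt_eq_slope f (fun _ => 0) hab hf hf'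
  rw [eq_comm, div_eq_zero_iff, sub_eq_zero, sub_eq_zero] at hc
  exact (hc.resolve_right hab.ne').symm

noncomputable def rogersL (x : ℝ) : ℝ := Li 2 x + log x * log (1 - x) / 2

noncomputable def rogersLDeriv (x : ℝ) : ℝ := -(log (1 - x) / x + log x / (1 - x)) / 2

lemma rogersL_zero : rogersL 0 = 0 := by simp [rogersL, Li_zero]

lemma rogersL_one : rogersL 1 = π ^ 2 / 6 := by simp [rogersL, Li_two_one]

lemma continuousOn_rogersL : ContinuousOn rogersL (Icc 0 1) :=
  ((continuousOn_Li one_lt_two).mono (Icc_subset_Icc (by norm_num) le_rfl)).add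
    (continuous_log_mul_log_one_sub.continuousOn.div_const 2)

lemma hasDerivAt_rogersL {x : ℝ} (hx : x ∈ Ioo 0 1) :
    HasDerivAt rogersL (rogersLDeriv x) x := by
  have hx0 : x ≠ 0 := hx.1.ne'
  have hx1 : 1 - x ≠ 0 := sub_ne_zero.mpr hx.2.ne'
  have hLi := hasDerivAt_Li_two hx0 (abs_lt.mpr ⟨by linarith [hx.1], hx.2⟩)
  have hlog := ((hasDerivAt_log hx0).mul (((hasDerivAt_id x).const_sub 1).log hx1)).div_const 2
  refine (hLi.add hlog).congr_deriv ?_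
  simp only [rogersLDeriv, id]
  field_simp
  ring

theorem rogersL_add_rogersL_one_sub {x : ℝ} (hx : x ∈ Icc 0 1) :
    rogersL x + rogersL (1 - x) = π ^ 2 / 6 := by
  have hsub : Icc 0 x ⊆ Icc 0 1 := Icc_subset_Icc_right hx.2
  have hconst := eq_of_continuousOn_of_hasDerivAt_zero (f := fun t => rogersL t + rogersL (1 - t))
    hx.1 ?_ fun t ht => ?_
  · simpa [rogersL_zero, rogersL_one] using hconst.symm
  · refine (continuousOn_rogersL.mono hsub).add
      (continuousOn_rogersL.comp (by fun_prop) fun t ht => ?_)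
    have := hsub ht
    exact ⟨by linarith [this.2], by linarith [this.1]⟩
  · have ht' : t ∈ Ioo 0 1 := ⟨ht.1, ht.2.trans_le hx.2⟩
    have h1t : 1 - t ∈ Ioo 0 1 := ⟨by linarith [ht'.2], by linarith [ht'.1]⟩
    refine ((hasDerivAt_rogersL ht').add
      ((hasDerivAt_rogersL h1t).comp t ((hasDerivAt_id t).const_sub 1))).congr_deriv ?_
    simp only [rogersLDeriv, sub_sub_cancel]
    ring

lemma mul_one_sub_div_one_sub_mul_mem_Icc {a b : ℝ} (ha : a ∈ Icc 0 1) (hb : b ∈ Icc 0 1)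
    (hab : a * b < 1) : a * (1 - b) / (1 - a * b) ∈ Icc 0 1 := by
  have hd : 0 < 1 - a * b := by linarith
  refine ⟨div_nonneg (mul_nonneg ha.1 (by linarith [hb.2])) hd.le, ?_⟩
  rw [div_le_one hd]
  nlinarith [ha.2, hb.1]

lemma mul_one_sub_div_one_sub_mul_mem_Ioo {a b : ℝ} (ha : a ∈ Ioo 0 1) (hb : b ∈ Ioo 0 1) :
    a * (1 - b) / (1 - a * b) ∈ Ioo 0 1 := by
  have hd : 0 < 1 - a * b := by nlinarith [ha.1, ha.2, hb.1, hb.2]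
  refine ⟨div_pos (mul_pos ha.1 (by linarith [hb.2])) hd, ?_⟩
  rw [div_lt_one hd]
  nlinarith [ha.2, hb.1]

lemma rogersLDeriv_five_term {t y : ℝ} (ht : t ∈ Ioo 0 1) (hy : y ∈ Ioo 0 1) :
    rogersLDeriv t = rogersLDeriv (t * y) * y
      + rogersLDeriv (t * (1 - y) / (1 - t * y)) * ((1 - y) / (1 - t * y) ^ 2)
      + rogersLDeriv (y * (1 - t) / (1 - t * y)) * (-(y * (1 - y)) / (1 - t * y) ^ 2) := by
  obtain ⟨ht0, ht1⟩ := ht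
  obtain ⟨hy0, hy1⟩ := hy
  have hd : 1 - t * y ≠ 0 := by nlinarith
  have h1t : 1 - t ≠ 0 := by linarith
  have h1y : 1 - y ≠ 0 := by linarith
  have hu : 1 - t * (1 - y) / (1 - t * y) = (1 - t) / (1 - t * y) := by field_simp; ring
  have hv : 1 - y * (1 - t) / (1 - t * y) = (1 - y) / (1 - t * y) := by
    rw [eq_div_iff hd, sub_mul, div_mul_cancel₀ _ hd]; ring
  simp only [rogersLDeriv, hu, hv]
  rw [log_div h1t hd, log_div (mul_ne_zero ht0.ne' h1y) hd, log_div h1y hd,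
    log_div (mul_ne_zero hy0.ne' h1t) hd, log_mul ht0.ne' h1y, log_mul hy0.ne' h1t,
    log_mul ht0.ne' hy0.ne']
  field_simp
  ring

noncomputable def rogersFiveTerm (y t : ℝ) : ℝ :=
  rogersL t - rogersL (t * y) - rogersL (t * (1 - y) / (1 - t * y))
    - rogersL (y * (1 - t) / (1 - t * y))

lemma continuousOn_rogersFiveTerm {y : ℝ} (hy : y ∈ Ioo 0 1) :
    ContinuousOn (rogersFiveTerm y) (Icc 0 1) := by
  have hy' : y ∈ Icc 0 1 := Ioo_subset_Icc_self hy
  have hty : ∀ t ∈ Icc (0 : ℝ) 1, t * y < 1 := fun t ht => by nlinarith [ht.2, hy.2, hy.1]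
  have hd : ∀ t ∈ Icc (0 : ℝ) 1, 1 - t * y ≠ 0 := fun t ht => by linarith [hty t ht]
  have hL : ∀ f : ℝ → ℝ, ContinuousOn f (Icc 0 1) → MapsTo f (Icc 0 1) (Icc 0 1) →
      ContinuousOn (fun t => rogersL (f t)) (Icc 0 1) :=
    fun f hf hmaps => continuousOn_rogersL.comp hf hmaps
  refine (((hL _ continuousOn_id (mapsTo_id _)).sub (hL _ (by fun_prop) fun t ht => ?_)).sub
    (hL _ (ContinuousOn.div (by fun_prop) (by fun_prop) hd) fun t ht => ?_)).sub
    (hL _ (ContinuousOn.div (by fun_prop) (by fun_prop) hd) fun t ht => ?_)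
  · exact ⟨mul_nonneg ht.1 hy'.1, mul_le_one₀ ht.2 hy'.1 hy'.2⟩
  · exact mul_one_sub_div_one_sub_mul_mem_Icc ht hy' (hty t ht)
  · simpa only [mul_comm y t] using
      mul_one_sub_div_one_sub_mul_mem_Icc hy' ht (mul_comm t y ▸ hty t ht)

lemma hasDerivAt_rogersFiveTerm {t y : ℝ} (ht : t ∈ Ioo 0 1) (hy : y ∈ Ioo 0 1) :
    HasDerivAt (rogersFiveTerm y) 0 t := by
  have hd : 1 - t * y ≠ 0 := by nlinarith [ht.1, ht.2, hy.1, hy.2]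
  have hu : HasDerivAt (fun s => s * (1 - y) / (1 - s * y)) ((1 - y) / (1 - t * y) ^ 2) t := by
    refine (((hasDerivAt_id' t).mul_const (1 - y)).div
      (((hasDerivAt_id' t).mul_const y).const_sub 1) hd).congr_deriv ?_
    field_simp
    ring
  have hv : HasDerivAt (fun s => y * (1 - s) / (1 - s * y))
      (-(y * (1 - y)) / (1 - t * y) ^ 2) t := by
    refine ((((hasDerivAt_id' t).const_sub 1).const_mul y).div
      (((hasDerivAt_id' t).mul_const y).const_sub 1) hd).congr_deriv ?_
    field_simp
    ring
  have hty : t * y ∈ Ioo 0 1 := ⟨mul_pos ht.1 hy.1, by nlinarith [ht.2, hy.1, hy.2]⟩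
  have hvt : y * (1 - t) / (1 - t * y) ∈ Ioo 0 1 := by
    simpa only [mul_comm y t] using mul_one_sub_div_one_sub_mul_mem_Ioo hy ht
  refine ((((hasDerivAt_rogersL ht).sub
    ((hasDerivAt_rogersL hty).comp t ((hasDerivAt_id' t).mul_const y))).sub
    ((hasDerivAt_rogersL (mul_one_sub_div_one_sub_mul_mem_Ioo ht hy)).comp t hu)).sub
    ((hasDerivAt_rogersL hvt).comp t hv)).congr_deriv ?_
  rw [rogersLDeriv_five_term ht hy]
  ring

lemma rogersFiveTerm_one {y : ℝ} (hy : y ≠ 1) : rogersFiveTerm y 1 = -rogersL y := by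
  simp [rogersFiveTerm, div_self (sub_ne_zero.mpr hy.symm), rogersL_zero, rogersL_one]

theorem rogersL_five_term {x y : ℝ} (hx : x ∈ Ioo 0 1) (hy : y ∈ Ioo 0 1) :
    rogersL x + rogersL y = rogersL (x * y) + rogersL (x * (1 - y) / (1 - x * y))
      + rogersL (y * (1 - x) / (1 - x * y)) := by
  have hconst : rogersFiveTerm y x = rogersFiveTerm y 1 :=
    eq_of_continuousOn_of_hasDerivAt_zero hx.2.le
      ((continuousOn_rogersFiveTerm hy).mono (Icc_subset_Icc_left hx.1.le))
      fun t ht => hasDerivAt_rogersFiveTerm ⟨hx.1.trans ht.1, ht.2⟩ hy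
  rw [rogersFiveTerm_one hy.2.ne, rogersFiveTerm] at hconst
  linarith

section GoldenLadder

lemma pow_eq_of_sq_eq_one_sub {r : ℝ} (hr : r ^ 2 = 1 - r) :
    r ^ 3 = 2 * r - 1 ∧ r ^ 4 = 2 - 3 * r ∧ r ^ 6 = 5 - 8 * r ∧ r ^ 12 = 89 - 144 * r := by
  have h3 : r ^ 3 = 2 * r - 1 := by linear_combination (r - 1) * hr
  have h6 : r ^ 6 = 5 - 8 * r := by
    linear_combination (r ^ 4 - r ^ 3 + 2 * r ^ 2 - 3 * r + 5) * hr
  refine ⟨h3, by linear_combination (r ^ 2 - r + 2) * hr, h6, ?_⟩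
  rw [show r ^ 12 = (r ^ 6) ^ 2 by ring, h6]
  linear_combination 64 * hr

lemma rogersL_five_term_of_eq {x y p u v : ℝ} (hx : x ∈ Ioo 0 1) (hy : y ∈ Ioo 0 1)
    (hp : x * y = p) (hu : x * (1 - y) = u * (1 - p)) (hv : y * (1 - x) = v * (1 - p)) :
    rogersL x + rogersL y = rogersL p + rogersL u + rogersL v := by
  have hd : 1 - x * y ≠ 0 := by nlinarith [hx.1, hx.2, hy.1, hy.2]
  subst hp
  rw [rogersL_five_term hx hy, eq_div_of_mul_eq hd hu.symm, eq_div_of_mul_eq hd hv.symm]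

lemma rogersL_sq_of_sq_eq_one_sub {r : ℝ} (hr : r ^ 2 = 1 - r) (hr0 : 0 < r) :
    rogersL (r ^ 2) = π ^ 2 / 15 := by
  have hr1 : r ∈ Ioo 0 1 := ⟨hr0, by nlinarith⟩
  have hreflect := rogersL_add_rogersL_one_sub (Ioo_subset_Icc_self hr1)
  have hfive : rogersL r + rogersL r = rogersL (1 - r) + rogersL (1 - r) + rogersL (1 - r) :=
    rogersL_five_term_of_eq hr1 hr1 (by linarith) (by ring) (by ring)
  rw [hr]
  linarith

local notation "L" => rogersL

theorem rogersL_golden_ladder {r : ℝ} (hr : r ^ 2 = 1 - r) (hr0 : 0 < r) :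
    4 * L (r ^ 3) + 3 * L (r ^ 4) + 2 * L (r ^ 6) - L (r ^ 12) = 3 * π ^ 2 / 10 := by
  have hr1 : 1 / 2 < r := by nlinarith
  have hr2 : r < 5 / 8 := by nlinarith
  obtain ⟨h3, h4, h6, h12⟩ := pow_eq_of_sq_eq_one_sub hr
  rw [h3, h4, h6, h12]
  have : L (1 - r) = π ^ 2 / 15 := by rw [← hr]; exact rogersL_sq_of_sq_eq_one_sub hr hr0
  have : L r + L (1 - r) = π ^ 2 / 6 := rogersL_add_rogersL_one_sub ⟨by linarith, by linarith⟩
  have : L (2 * r - 1) + L (2 - 2 * r) = π ^ 2 / 6 := by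
    rw [show 2 - 2 * r = 1 - (2 * r - 1) by ring]
    exact rogersL_add_rogersL_one_sub ⟨by linarith, by linarith⟩
  -- All arguments lie in `ℚ + ℚ r`, so the side conditions are linear modulo `r ^ 2 = 1 - r`.
  have : L (1 - r) + L r = L (2 * r - 1) + L ((1 - r) / 2) + L (1 / 2) := by
    refine rogersL_five_term_of_eq ⟨?_, ?_⟩ ⟨?_, ?_⟩ ?_ ?_ ?_ <;> linarith
  have : L (1 - r) + L (1 - r) = L (2 - 3 * r) + L ((2 - r) / 5) + L ((2 - r) / 5) := by
    refine rogersL_five_term_of_eq ⟨?_, ?_⟩ ⟨?_, ?_⟩ ?_ ?_ ?_ <;> linarith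
  have : L (2 * r - 1) + L r = L (2 - 3 * r) + L ((3 - 4 * r) / 5) + L ((4 - 2 * r) / 5) := by
    refine rogersL_five_term_of_eq ⟨?_, ?_⟩ ⟨?_, ?_⟩ ?_ ?_ ?_ <;> linarith
  have : L (2 * r - 1) + L (2 * r - 1) = L (5 - 8 * r) + L ((1 - r) / 2) + L ((1 - r) / 2) := by
    refine rogersL_five_term_of_eq ⟨?_, ?_⟩ ⟨?_, ?_⟩ ?_ ?_ ?_ <;> linarith
  have : L (5 - 8 * r) + L (5 - 8 * r)
      = L (89 - 144 * r) + L ((3 - 4 * r) / 10) + L ((3 - 4 * r) / 10) := by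
    refine rogersL_five_term_of_eq ⟨?_, ?_⟩ ⟨?_, ?_⟩ ?_ ?_ ?_ <;> linarith
  have : L (1 / 2) + L (1 - r) = L ((1 - r) / 2) + L (1 - r) + L (2 * r - 1) := by
    refine rogersL_five_term_of_eq ⟨?_, ?_⟩ ⟨?_, ?_⟩ ?_ ?_ ?_ <;> linarith
  have : L (2 - 2 * r) + L r = L (4 * r - 2) + L ((4 - 2 * r) / 5) + L ((2 - r) / 5) := by
    refine rogersL_five_term_of_eq ⟨?_, ?_⟩ ⟨?_, ?_⟩ ?_ ?_ ?_ <;> linarith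
  have : L ((3 - 4 * r) / 5) + L (1 / 2)
      = L ((3 - 4 * r) / 10) + L (5 - 8 * r) + L (4 * r - 2) := by
    refine rogersL_five_term_of_eq ⟨?_, ?_⟩ ⟨?_, ?_⟩ ?_ ?_ ?_ <;> linarith
  linarith

end GoldenLadder

lemma Li_two_eq_rogersL_sub (x : ℝ) : Li 2 x = rogersL x - log x * log (1 - x) / 2 := by
  rw [rogersL]; ring

theorem Li_two_golden_ladder {r : ℝ} (hr : r ^ 2 = 1 - r) (hr0 : 0 < r) :
    Li 2 (r ^ 12) = 2 * Li 2 (r ^ 6) + 3 * Li 2 (r ^ 4) + 4 * Li 2 (r ^ 3) - 6 * Li 2 (r ^ 2)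
      + π ^ 2 / 10 := by
  obtain ⟨h3, h4, h6, h12⟩ := pow_eq_of_sq_eq_one_sub hr
  have hr4 : 0 < 1 - r ^ 4 := by nlinarith
  have l2 : log (1 - r ^ 2) = log r := by rw [hr, sub_sub_cancel]
  have l3 : log (1 - r ^ 3) = log 2 + 2 * log r := by
    rw [show 1 - r ^ 3 = 2 * r ^ 2 by linarith, log_mul two_ne_zero (by positivity), log_pow]
    push_cast; ring
  have l6 : log (1 - r ^ 6) = 2 * log 2 + 3 * log r := by
    rw [show 1 - r ^ 6 = 2 ^ 2 * r ^ 3 by linarith, log_mul (by positivity) (by positivity),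
      log_pow, log_pow]
    push_cast; ring
  have l12 : log (1 - r ^ 12) = 3 * log 2 + 4 * log r + log (1 - r ^ 4) := by
    rw [show 1 - r ^ 12 = 2 ^ 3 * r ^ 4 * (1 - r ^ 4) by rw [h12, h4]; linarith,
      log_mul (by positivity) hr4.ne', log_mul (by positivity) (by positivity), log_pow, log_pow]
    push_cast; ring
  simp only [Li_two_eq_rogersL_sub, log_pow, l2, l3, l6, l12, Nat.cast_ofNat]
  linear_combination -rogersL_golden_ladder hr hr0 + 6 * rogersL_sq_of_sq_eq_one_sub hr hr0

theorem stmt_8 :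
    Li 2 (((Real.sqrt 5 - 1) / 2) ^ 12)
      = 2 * Li 2 (((Real.sqrt 5 - 1) / 2) ^ 6) + 3 * Li 2 (((Real.sqrt 5 - 1) / 2) ^ 4)
        + 4 * Li 2 (((Real.sqrt 5 - 1) / 2) ^ 3) - 6 * Li 2 (((Real.sqrt 5 - 1) / 2) ^ 2)
        + Real.pi ^ 2 / 10 := by
  have h5 : Real.sqrt 5 ^ 2 = 5 := Real.sq_sqrt (by norm_num)
  have h1 : 1 < Real.sqrt 5 := by rw [Real.lt_sqrt zero_le_one]; norm_num
  exact Li_two_golden_ladder (by linear_combination h5 / 4) (by linarith)
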